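/- Let I ⊂ R be an ideal generated by bihomogeneous forms of bidegree ≤ (r,r'), and assume that I is (p,p')-regular and that dim R/I = 0 (Krull dimension). Then for every e ≥ 1 the power I^e is (l,l')-regular for some (l,l') ≤ ((e−1)r + p, (e−1)r' + p'); in particular I^e is ((e−1)r + p, (e−1)r' + p')-regular. -/

import Mathlib

noncomputable section

open MvPolynomial Finset

/-- The saturation of a submodule `M ⊆ N` with respect to an ideal `J`:
`{x ∈ N : J^e • x ⊆ M for some e}`. -/
def satur {A : Type*} [CommRing A] {N : Type*} [AddCommGroup N] [Module A N]
    (J : Ideal A) (M : Submodule A N) : Submodule A N where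
  carrier := {x | ∃ e : ℕ, ∀ r ∈ J ^ e, r • x ∈ M}
  add_mem' := by
    rintro a b ⟨e₁, h₁⟩ ⟨e₂, h₂⟩
    refine ⟨max e₁ e₂, fun r hr => ?_⟩
    rw [smul_add]
    exact M.add_mem (h₁ r (Ideal.pow_le_pow_right (le_max_left _ _) hr))
      (h₂ r (Ideal.pow_le_pow_right (le_max_right _ _) hr))
  zero_mem' := ⟨0, fun r _ => by simp⟩
  smul_mem' := by
    rintro c x ⟨e, h⟩
    refine ⟨e, fun r hr => ?_⟩
    rw [smul_comm]
    exact M.smul_mem c (h r hr)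

section Koszul

variable {A : Type*} [CommRing A] {N : Type*} [AddCommGroup N] [Module A N]
variable {γ : Type*} [Fintype γ] [LinearOrder γ]

/-- The Koszul differential of the Koszul cochain complex on the `t`-th powers of the
family `f`, with coefficients in `N`.  A `k`-cochain is recorded as a function on all finite
subsets of `γ`; only its values on subsets of cardinality `k` are relevant. -/
def kosD (f : γ → A) (t : ℕ) (φ : Finset γ → N) : Finset γ → N := fun S =>
  ∑ j ∈ S, ((-1 : ℤ) ^ (S.filter (fun i => i < j)).card) • ((f j ^ t) • φ (S.erase j))

/-- The transition map from the Koszul complex on `f^t` to the one on `f^t'` (`t ≤ t'`). -/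
def kosT (f : γ → A) (t t' : ℕ) (φ : Finset γ → N) : Finset γ → N := fun S =>
  (∏ j ∈ S, f j ^ (t' - t)) • φ S

/-- `φ` is a `k`-cochain of the `t`-th Koszul complex on `f`, with values in the submodule
`M`, which is bihomogeneous of bidegree `d` (relative to the bihomogeneity notion `hom` on
`N` and the bidegrees `wf` of the members of `f`). -/
def IsKCochain (hom : ℤ × ℤ → Set N) (M : Submodule A N) (f : γ → A) (wf : γ → ℤ × ℤ)
    (d : ℤ × ℤ) (t k : ℕ) (φ : Finset γ → N) : Prop :=
  ∀ S : Finset γ, S.card = k → φ S ∈ M ∧ φ S ∈ hom (d + t • ∑ j ∈ S, wf j)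

/-- The bidegree-`d` graded piece of the local cohomology module `H^i_𝔪(M)` (`𝔪 = ⟨f⟩`)
vanishes.  Local cohomology is the direct limit over `t` of the cohomology of the Koszul
complexes on the powers `f^t`; its bidegree-`d` piece vanishes iff every bidegree-`d`
cocycle eventually becomes a coboundary. -/
def LCVanish (hom : ℤ × ℤ → Set N) (M : Submodule A N) (f : γ → A) (wf : γ → ℤ × ℤ)
    (i : ℕ) (d : ℤ × ℤ) : Prop :=
  ∀ (t : ℕ) (φ : Finset γ → N), IsKCochain hom M f wf d t i φ →
    (∀ S : Finset γ, S.card = i + 1 → kosD f t φ S = 0) →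
    ∃ t' : ℕ, t ≤ t' ∧ ∃ ψ : Finset γ → N, IsKCochain hom M f wf d t' (i - 1) ψ ∧
      ∀ S : Finset γ, S.card = i → kosT f t t' φ S = kosD f t' ψ S

/-- The region `Reg_j(p,p') = {(x,y) ∈ ℤ² : x ≥ p−j, y ≥ p'−j, x+y ≥ p+p'−j−1}`. -/
def RegSet (j p p' : ℤ) : Set (ℤ × ℤ) :=
  {q | p - j ≤ q.1 ∧ p' - j ≤ q.2 ∧ p + p' - j - 1 ≤ q.1 + q.2}

/-- `M` is `(p,p')`-regular: `H^i_𝔪(M)_{k,k'} = 0` whenever `(k,k') ∈ Reg_{i−1}(p,p')`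
(Definition 3.1 of Hoffman–Wang). -/
def IsBiregular (hom : ℤ × ℤ → Set N) (M : Submodule A N) (f : γ → A) (wf : γ → ℤ × ℤ)
    (p p' : ℤ) : Prop :=
  ∀ i : ℕ, ∀ d ∈ RegSet ((i : ℤ) - 1) p p', LCVanish hom M f wf i d

end Koszul

/-- The bigrading on `K[x_0,…,x_m,y_0,…,y_n]`: `deg x_i = (1,0)`, `deg y_j = (0,1)`. -/
def pw (m n : ℕ) : Fin (m + 1) ⊕ Fin (n + 1) → ℤ × ℤ :=
  Sum.elim (fun _ => ((1 : ℤ), (0 : ℤ))) (fun _ => ((0 : ℤ), (1 : ℤ)))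

/-- The generators `x_i y_j` of the irrelevant ideal `𝔪 = ⟨x_0,…,x_m⟩ ∩ ⟨y_0,…,y_n⟩`. -/
def irrGen (K : Type*) [Field K] (m n : ℕ) :
    Fin ((m + 1) * (n + 1)) → MvPolynomial (Fin (m + 1) ⊕ Fin (n + 1)) K := fun k =>
  X (Sum.inl (finProdFinEquiv.symm k).1) * X (Sum.inr (finProdFinEquiv.symm k).2)

/-- The irrelevant ideal `𝔪`. -/
def irrIdeal (K : Type*) [Field K] (m n : ℕ) :
    Ideal (MvPolynomial (Fin (m + 1) ⊕ Fin (n + 1)) K) :=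
  Ideal.span (Set.range (irrGen K m n))

/-- The bidegrees of the generators of `𝔪` (each `x_i y_j` has bidegree `(1,1)`). -/
def irrW (m n : ℕ) : Fin ((m + 1) * (n + 1)) → ℤ × ℤ := fun _ => (1, 1)

/-- The set of bihomogeneous elements of bidegree `d` in `R`. -/
def homR (K : Type*) [Field K] (m n : ℕ) (d : ℤ × ℤ) :
    Set (MvPolynomial (Fin (m + 1) ⊕ Fin (n + 1)) K) :=
  {f | f.IsWeightedHomogeneous (pw m n) d}

/-- The set of bihomogeneous elements of bidegree `d` in the free module `F = R^q`
(the generators of `F` sitting in bidegree `(0,0)`). -/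
def homF (K : Type*) [Field K] (m n q : ℕ) (d : ℤ × ℤ) :
    Set (Fin q → MvPolynomial (Fin (m + 1) ⊕ Fin (n + 1)) K) :=
  {x | ∀ i, (x i).IsWeightedHomogeneous (pw m n) d}

/-!
Since `dim R/I = 0` and `I` is bihomogeneous, the homogeneous core of any prime over `I` is a
maximal homogeneous ideal, hence the ideal of all variables; so `𝔪 ⊆ √I` and `𝔪^t₀ ⊆ I`.
Vanishing of `H^1_𝔪(I)` in a bidegree `d ≥ (p,p')` then says that every form of bidegree `d`
lies in `I`, and writing such a form through generators of bidegree `≤ (r,r')` shows that `I^e`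
contains every form of bidegree `≥ ((e-1)r + p, (e-1)r' + p')`.  A Koszul cocycle with values in
`I^e ⊆ I` is a coboundary of a cochain with values in `I`; pushing that cochain further along the
direct system raises its bidegree into the range where `I` and `I^e` agree.
-/

section Koszul

variable {A N γ : Type*} [CommRing A] [AddCommGroup N] [Module A N] (f : γ → A)

theorem kosT_kosT {t t₁ t₂ : ℕ} (h₁ : t ≤ t₁) (h₂ : t₁ ≤ t₂) (φ : Finset γ → N) :
    kosT f t₁ t₂ (kosT f t t₁ φ) = kosT f t t₂ φ := by
  ext S
  simp only [kosT, smul_smul, ← Finset.prod_mul_distrib, ← pow_add]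
  congr 3 with j
  rw [Nat.sub_add_sub_cancel h₂ h₁]

variable [LinearOrder γ]

theorem kosD_kosT {t₁ t₂ : ℕ} (h : t₁ ≤ t₂) (ψ : Finset γ → N) :
    kosD f t₂ (kosT f t₁ t₂ ψ) = kosT f t₁ t₂ (kosD f t₁ ψ) := by
  ext S
  simp only [kosD, kosT, Finset.smul_sum, smul_comm (_ : A) (_ : ℤ), smul_smul]
  refine Finset.sum_congr rfl fun j hj => ?_
  obtain ⟨δ, rfl⟩ := Nat.exists_eq_add_of_le h
  rw [← Finset.mul_prod_erase S _ hj, Nat.add_sub_cancel_left, pow_add]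
  ring_nf

theorem kosD_singleton (t : ℕ) (φ : Finset γ → N) (a : γ) : kosD f t φ {a} = f a ^ t • φ ∅ := by
  simp [kosD, Finset.filter_singleton]

theorem kosD_zero_const_of_card_eq_two (v : N) {S : Finset γ} (hS : S.card = 2) :
    kosD f 0 (fun _ => v) S = 0 := by
  obtain ⟨a, b, hab, rfl⟩ := Finset.card_eq_two.mp hS
  clear hS
  wlog h : a < b generalizing a b
  · rw [Finset.pair_comm]
    exact this b a hab.symm (hab.lt_or_gt.resolve_left h)
  have hb : ({a, b} : Finset γ).filter (· < b) = {a} := by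
    ext x; simp only [Finset.mem_filter, Finset.mem_insert, Finset.mem_singleton]; grind
  have ha : ({a, b} : Finset γ).filter (· < a) = ∅ := by
    ext x; simp only [Finset.mem_filter, Finset.mem_insert, Finset.mem_singleton]; grind
  simp [kosD, Finset.sum_pair hab, ha, hb]

end Koszul

theorem Ideal.IsPrime.isMaximal_of_le {R : Type*} [CommRing R] {I P : Ideal R}
    [Ring.KrullDimLE 0 (R ⧸ I)] (hP : P.IsPrime) (hIP : I ≤ P) : P.IsMaximal := by
  have hsurj := Ideal.Quotient.mk_surjective (I := I)
  have hker : RingHom.ker (Ideal.Quotient.mk I) ≤ P := by rwa [Ideal.mk_ker]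
  have := (Ideal.map_isPrime_of_surjective hsurj hker).isMaximal'
  have := Ideal.comap_isMaximal_of_surjective _ hsurj (K := P.map (Ideal.Quotient.mk I))
  rwa [Ideal.comap_map_mk hIP] at this

namespace MvPolynomial

variable {R σ M : Type*} [CommRing R]

theorem weightedHomogeneousComponent_add_mul [AddCancelCommMonoid M] {w : σ → M}
    {b : MvPolynomial σ R} {j : M} (hb : b.IsWeightedHomogeneous w j)
    (a : MvPolynomial σ R) (i : M) :
    weightedHomogeneousComponent w (i + j) (a * b) = weightedHomogeneousComponent w i a * b := by
  classical
  let := weightedGradedAlgebra R w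
  simpa only [DirectSum.decompose, Equiv.coe_fn_mk, weightedDecomposition.decompose'_apply] using
    DirectSum.coe_decompose_mul_add_of_right_mem (weightedHomogeneousSubmodule R w) (a := a)
      (i := i) hb

theorem isWeightedHomogeneous_kosT [AddCommMonoid M] {w : σ → M} {γ : Type*}
    {f : γ → MvPolynomial σ R} {wf : γ → M}
    (hf : ∀ j, (f j).IsWeightedHomogeneous w (wf j)) {t₁ t₂ : ℕ} (h : t₁ ≤ t₂)
    {ψ : Finset γ → MvPolynomial σ R} {d : M} {S : Finset γ}
    (hψ : (ψ S).IsWeightedHomogeneous w (d + t₁ • ∑ j ∈ S, wf j)) :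
    (kosT f t₁ t₂ ψ S).IsWeightedHomogeneous w (d + t₂ • ∑ j ∈ S, wf j) := by
  have hprod := IsWeightedHomogeneous.prod S _ _ fun j _ => (hf j).pow (t₂ - t₁)
  rw [← Finset.smul_sum] at hprod
  have hdeg :
      (t₂ - t₁) • ∑ j ∈ S, wf j + (d + t₁ • ∑ j ∈ S, wf j) = d + t₂ • ∑ j ∈ S, wf j := by
    rw [add_left_comm, ← add_nsmul, Nat.sub_add_cancel h]
  exact hdeg ▸ hprod.mul hψ

theorem mem_pow_succ_of_isWeightedHomogeneous {ζ : Type*} [AddCommGroup M] [PartialOrder M]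
    [IsOrderedAddMonoid M] {w : σ → M} {I : Ideal (MvPolynomial σ R)} {g : ζ → MvPolynomial σ R}
    (hI : I = Ideal.span (Set.range g))
    {c : M} (hc : 0 ≤ c) (hg : ∀ i, ∃ d ≤ c, (g i).IsWeightedHomogeneous w d) {b : M}
    (hb : ∀ v d, v.IsWeightedHomogeneous w d → b ≤ d → v ∈ I) (k : ℕ) {v : MvPolynomial σ R}
    {d : M} (hv : v.IsWeightedHomogeneous w d) (hd : b + k • c ≤ d) : v ∈ I ^ (k + 1) := by
  induction k generalizing v d with
  | zero => simpa using hb v d hv (by simpa using hd)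
  | succ k ih =>
    have hvI : v ∈ I := hb v d hv (le_trans (le_add_of_nonneg_right (nsmul_nonneg hc _)) hd)
    rw [hI] at hvI
    obtain ⟨a, rfl⟩ := Finsupp.mem_ideal_span_range_iff_exists_finsupp.mp hvI
    rw [← hv.weightedHomogeneousComponent_same, Finsupp.sum, map_sum, pow_succ]
    refine Ideal.sum_mem _ fun i _ => ?_
    obtain ⟨dᵢ, hdᵢ, hgᵢ⟩ := hg i
    rw [← sub_add_cancel d dᵢ, weightedHomogeneousComponent_add_mul hgᵢ]
    refine Ideal.mul_mem_mul (ih (weightedHomogeneousComponent_isWeightedHomogeneous _ _) ?_)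
      (hI ▸ Ideal.subset_span ⟨i, rfl⟩)
    calc b + k • c = b + (k + 1) • c - c := by rw [succ_nsmul, add_sub_assoc, add_sub_cancel_right]
      _ ≤ d - dᵢ := sub_le_sub hd hdᵢ

end MvPolynomial

section Bigraded

variable {K : Type*} [Field K] {m n : ℕ}

theorem fst_add_snd_weight_pw (μ : Fin (m + 1) ⊕ Fin (n + 1) →₀ ℕ) :
    (Finsupp.weight (pw m n) μ).1 + (Finsupp.weight (pw m n) μ).2 = μ.degree := by
  simp only [Finsupp.weight_apply, Finsupp.sum, Finsupp.degree_apply, Prod.fst_sum, Prod.snd_sum,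
    ← Finset.sum_add_distrib, Nat.cast_sum]
  refine Finset.sum_congr rfl fun i _ => ?_
  rcases i with i | i <;> simp [pw]

theorem MvPolynomial.IsWeightedHomogeneous.isHomogeneous_of_pw
    {φ : MvPolynomial (Fin (m + 1) ⊕ Fin (n + 1)) K} {d : ℤ × ℤ}
    (hφ : φ.IsWeightedHomogeneous (pw m n) d) : φ.IsHomogeneous (d.1 + d.2).toNat := by
  intro μ hμ
  have := fst_add_snd_weight_pw μ
  rw [hφ hμ] at this
  rw [Finsupp.degree_eq_weight_one, ← Pi.one_def] at this
  omega

theorem isWeightedHomogeneous_irrGen (j : Fin ((m + 1) * (n + 1))) :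
    (irrGen K m n j).IsWeightedHomogeneous (pw m n) (irrW m n j) :=
  (isWeightedHomogeneous_X K (pw m n) _).mul (isWeightedHomogeneous_X K (pw m n) _)

theorem irrGen_ne_zero (j : Fin ((m + 1) * (n + 1))) : irrGen K m n j ≠ 0 :=
  mul_ne_zero (X_ne_zero _) (X_ne_zero _)

theorem sum_irrW (S : Finset (Fin ((m + 1) * (n + 1)))) :
    ∑ j ∈ S, irrW m n j = S.card • ((1 : ℤ), (1 : ℤ)) :=
  Finset.sum_const _

theorem irrIdeal_le_ker_constantCoeff :
    irrIdeal K m n ≤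
      RingHom.ker (constantCoeff : MvPolynomial (Fin (m + 1) ⊕ Fin (n + 1)) K →+* K) := by
  rw [irrIdeal, Ideal.span_le]
  rintro _ ⟨j, rfl⟩
  simp [irrGen]

end Bigraded

section TotalDegree

attribute [local instance] MvPolynomial.gradedAlgebra

theorem Ideal.IsHomogeneous.le_ker_constantCoeff {K σ : Type*} [Field K]
    {J : Ideal (MvPolynomial σ K)} (hJ : J.IsHomogeneous (homogeneousSubmodule σ K))
    (hJ_ne_top : J ≠ ⊤) : J ≤ RingHom.ker (constantCoeff : MvPolynomial σ K →+* K) := by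
  intro x hx
  have hC : C (coeff 0 x) ∈ J := by
    rw [← homogeneousComponent_zero]
    exact homogeneousComponent_mem_of_mem hJ hx 0
  by_contra hx0
  exact hJ_ne_top (J.eq_top_of_isUnit_mem hC ((isUnit_iff_ne_zero.mpr hx0).map C))

theorem irrIdeal_le_radical {K ζ : Type*} [Field K] {m n : ℕ}
    {I : Ideal (MvPolynomial (Fin (m + 1) ⊕ Fin (n + 1)) K)}
    {g : ζ → MvPolynomial (Fin (m + 1) ⊕ Fin (n + 1)) K} (hI : I = Ideal.span (Set.range g))
    (hg : ∀ i, ∃ d, (g i).IsWeightedHomogeneous (pw m n) d)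
    [Ring.KrullDimLE 0 (MvPolynomial (Fin (m + 1) ⊕ Fin (n + 1)) K ⧸ I)] :
    irrIdeal K m n ≤ I.radical := by
  rw [Ideal.radical_eq_sInf]
  refine le_sInf fun P ⟨hIP, hP⟩ => ?_
  set Q := (P.homogeneousCore (homogeneousSubmodule _ K)).toIdeal
  have hIQ : I ≤ Q := by
    rw [hI, Ideal.span_le]
    rintro _ ⟨i, rfl⟩
    obtain ⟨d, hd⟩ := hg i
    exact Ideal.mem_homogeneousCore_of_homogeneous_of_mem ⟨_, hd.isHomogeneous_of_pw⟩
      (hIP (hI ▸ Ideal.subset_span ⟨i, rfl⟩))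
  have hQ : Q.IsMaximal := hP.homogeneousCore.isMaximal_of_le hIQ
  calc irrIdeal K m n ≤ RingHom.ker constantCoeff := irrIdeal_le_ker_constantCoeff
    _ = Q := (hQ.eq_of_le (RingHom.ker_ne_top _)
        ((P.homogeneousCore _).isHomogeneous.le_ker_constantCoeff hQ.ne_top)).symm
    _ ≤ P := Ideal.toIdeal_homogeneousCore_le _ _

end TotalDegree

section LocalCohomology

variable {K : Type*} [Field K] {m n : ℕ}

theorem regSet_subset_regSet {j p p' q q' : ℤ} (hq : q ≤ p) (hq' : q' ≤ p') :
    RegSet j p p' ⊆ RegSet j q q' := fun _ ⟨h₁, h₂, h₃⟩ => ⟨by omega, by omega, by omega⟩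

theorem mem_regSet_of_le {j p p' : ℤ} (hj : 0 ≤ j) {d : ℤ × ℤ} (hd : (p, p') ≤ d) :
    d ∈ RegSet j p p' := by
  obtain ⟨h₁, h₂⟩ : p ≤ d.1 ∧ p' ≤ d.2 := hd
  exact ⟨by omega, by omega, by omega⟩

theorem le_add_nsmul_of_mem_regSet {i : ℕ} {p p' : ℤ} {d : ℤ × ℤ} (hd : d ∈ RegSet i p p') :
    (p, p') ≤ d + i • ((1 : ℤ), (1 : ℤ)) := by
  obtain ⟨h₁, h₂, -⟩ := hd
  constructor <;> simp <;> omega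

theorem lcVanish_zero (M : Ideal (MvPolynomial (Fin (m + 1) ⊕ Fin (n + 1)) K)) (d : ℤ × ℤ) :
    LCVanish (homR K m n) M (irrGen K m n) (irrW m n) 0 d := by
  intro t φ _ hφ_cocycle
  have hφ : φ ∅ = 0 := by
    have h := hφ_cocycle {finProdFinEquiv (0, 0)} (Finset.card_singleton _)
    rw [kosD_singleton, smul_eq_mul] at h
    exact (mul_eq_zero.mp h).resolve_left (pow_ne_zero _ (irrGen_ne_zero _))
  refine ⟨t, le_rfl, 0, fun _ _ => ⟨M.zero_mem, isWeightedHomogeneous_zero _ _ _⟩, fun S hS => ?_⟩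
  rw [Finset.card_eq_zero.mp hS]
  simp [kosT, kosD, hφ]

theorem mem_of_lcVanish_one {I : Ideal (MvPolynomial (Fin (m + 1) ⊕ Fin (n + 1)) K)} {t₀ : ℕ}
    (ht₀ : irrIdeal K m n ^ t₀ ≤ I) {d : ℤ × ℤ}
    (hI : LCVanish (homR K m n) I (irrGen K m n) (irrW m n) 1 d)
    {v : MvPolynomial (Fin (m + 1) ⊕ Fin (n + 1)) K} (hv : v ∈ homR K m n d) : v ∈ I := by
  set φ := kosT (irrGen K m n) 0 t₀ (fun _ => v)
  have hφ : IsKCochain (homR K m n) I (irrGen K m n) (irrW m n) d t₀ 1 φ := by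
    intro S hS
    obtain ⟨a, rfl⟩ := Finset.card_eq_one.mp hS
    have ha : irrGen K m n a ∈ irrIdeal K m n := Ideal.subset_span ⟨a, rfl⟩
    refine ⟨?_, isWeightedHomogeneous_kosT isWeightedHomogeneous_irrGen (Nat.zero_le _)
      (by simpa [homR] using hv)⟩
    simpa [φ, kosT] using I.mul_mem_right v (ht₀ (Ideal.pow_mem_pow ha _))
  have hφ_cocycle : ∀ S : Finset _, S.card = 1 + 1 → kosD (irrGen K m n) t₀ φ S = 0 := by
    intro S hS
    rw [kosD_kosT _ (Nat.zero_le _), kosT, kosD_zero_const_of_card_eq_two _ _ hS, smul_zero]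
  obtain ⟨t, ht, ψ, hψ, hφψ⟩ := hI t₀ φ hφ hφ_cocycle
  have h := hφψ {finProdFinEquiv (0, 0)} (Finset.card_singleton _)
  rw [kosT_kosT _ (Nat.zero_le _) ht, kosD_singleton] at h
  simp only [kosT, Finset.prod_singleton, Nat.sub_zero, smul_eq_mul] at h
  rw [mul_left_cancel₀ (pow_ne_zero _ (irrGen_ne_zero _)) h]
  exact (hψ ∅ Finset.card_empty).1

theorem LCVanish.succ_of_le {I J : Ideal (MvPolynomial (Fin (m + 1) ⊕ Fin (n + 1)) K)}
    {i : ℕ} {d : ℤ × ℤ} (hI : LCVanish (homR K m n) I (irrGen K m n) (irrW m n) (i + 1) d)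
    (hJI : J ≤ I) {b : ℤ × ℤ} (hJ : ∀ v e, v ∈ homR K m n e → b ≤ e → v ∈ J)
    (hd : b ≤ d + i • ((1 : ℤ), (1 : ℤ))) :
    LCVanish (homR K m n) J (irrGen K m n) (irrW m n) (i + 1) d := by
  intro t φ hφ hφ_cocycle
  obtain ⟨t₁, ht₁, ψ, hψ, hφψ⟩ :=
    hI t φ (fun S hS => ⟨hJI (hφ S hS).1, (hφ S hS).2⟩) hφ_cocycle
  -- at least one step beyond `t₁`, so that the bidegree rises by at least `(i, i)`
  set t₂ := max t₁ 1
  refine ⟨t₂, ht₁.trans (le_max_left _ _), kosT (irrGen K m n) t₁ t₂ ψ, fun S hS => ?_,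
    fun S hS => ?_⟩
  · have hhom : kosT (irrGen K m n) t₁ t₂ ψ S ∈ homR K m n (d + t₂ • ∑ j ∈ S, irrW m n j) :=
      isWeightedHomogeneous_kosT isWeightedHomogeneous_irrGen (le_max_left _ _) (hψ S hS).2
    refine ⟨hJ _ _ hhom ?_, hhom⟩
    rw [sum_irrW, hS, Nat.add_sub_cancel, smul_smul]
    refine hd.trans (add_le_add_right (nsmul_le_nsmul_left ?_ ?_) d)
    · exact Prod.mk_le_mk.mpr ⟨zero_le_one, zero_le_one⟩
    · exact Nat.le_mul_of_pos_left i (by omega)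
  · rw [kosD_kosT _ (le_max_left _ _), ← kosT_kosT _ ht₁ (le_max_left _ _)]
    simp only [kosT] at hφψ ⊢
    rw [hφψ S hS]

end LocalCohomology

theorem stmt4_general (K : Type*) [Field K] (m n : ℕ)
    (I : Ideal (MvPolynomial (Fin (m + 1) ⊕ Fin (n + 1)) K))
    (ζ : Type*) (g : ζ → MvPolynomial (Fin (m + 1) ⊕ Fin (n + 1)) K)
    (hI : I = Ideal.span (Set.range g)) (r r' : ℕ)
    (hg : ∀ i, ∃ d : ℤ × ℤ, d ≤ ((r : ℤ), (r' : ℤ)) ∧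
      (g i).IsWeightedHomogeneous (pw m n) d)
    (p p' : ℤ)
    (hreg : IsBiregular (homR K m n) I (irrGen K m n) (irrW m n) p p')
    (hdim : ringKrullDim (MvPolynomial (Fin (m + 1) ⊕ Fin (n + 1)) K ⧸ I) = 0)
    (e : ℕ) (he : 1 ≤ e) :
    IsBiregular (homR K m n) (I ^ e) (irrGen K m n) (irrW m n)
      (((e : ℤ) - 1) * r + p) (((e : ℤ) - 1) * r' + p') := by
  obtain ⟨k, rfl⟩ : ∃ k, e = k + 1 := ⟨e - 1, by omega⟩
  have := Ring.krullDimLE_iff.mpr hdim.le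
  obtain ⟨t₀, ht₀⟩ := Ideal.exists_pow_le_of_le_radical_of_fg
    (irrIdeal_le_radical hI fun i => (hg i).imp fun _ => And.right)
    (Submodule.fg_span (Set.finite_range _))
  have hI_high : ∀ v d, v.IsWeightedHomogeneous (pw m n) d → (p, p') ≤ d → v ∈ I :=
    fun v d hv hd => mem_of_lcVanish_one ht₀ (hreg 1 d (mem_regSet_of_le (by norm_num) hd)) hv
  have hb : ((k : ℤ) * r + p, (k : ℤ) * r' + p') = (p, p') + k • ((r : ℤ), (r' : ℤ)) := by
    ext <;> simp [add_comm]
  have hIe_high : ∀ v d, v ∈ homR K m n d →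
      ((k : ℤ) * r + p, (k : ℤ) * r' + p') ≤ d → v ∈ I ^ (k + 1) := fun v d hv hd =>
    mem_pow_succ_of_isWeightedHomogeneous hI (by simp [Prod.le_def]) hg hI_high k hv (hb ▸ hd)
  rintro (_ | i) d hd
  · exact lcVanish_zero _ _
  · have hd' : d ∈ RegSet i (k * r + p) (k * r' + p') := by simpa using hd
    have hd_I : d ∈ RegSet (↑(i + 1) - 1) p p' := by
      simpa using regSet_subset_regSet (le_add_of_nonneg_left (by positivity))
        (le_add_of_nonneg_left (by positivity)) hd'
    exact (hreg (i + 1) d hd_I).succ_of_le (Ideal.pow_le_self k.succ_ne_zero) hIe_high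
      (le_add_nsmul_of_mem_regSet hd')

theorem stmt4 (K : Type*) [Field K] [Infinite K] (m n : ℕ) (hm : 1 ≤ m) (hn : 1 ≤ n)
    (I : Ideal (MvPolynomial (Fin (m + 1) ⊕ Fin (n + 1)) K))
    (ζ : Type*) (g : ζ → MvPolynomial (Fin (m + 1) ⊕ Fin (n + 1)) K)
    (hI : I = Ideal.span (Set.range g)) (r r' : ℕ)
    (hg : ∀ i, ∃ d : ℤ × ℤ, d ≤ ((r : ℤ), (r' : ℤ)) ∧
      (g i).IsWeightedHomogeneous (pw m n) d)
    (p p' : ℤ)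
    (hreg : IsBiregular (homR K m n) I (irrGen K m n) (irrW m n) p p')
    (hdim : ringKrullDim (MvPolynomial (Fin (m + 1) ⊕ Fin (n + 1)) K ⧸ I) = 0)
    (e : ℕ) (he : 1 ≤ e) :
    IsBiregular (homR K m n) (I ^ e) (irrGen K m n) (irrW m n)
      (((e : ℤ) - 1) * r + p) (((e : ℤ) - 1) * r' + p') :=
  stmt4_general K m n I ζ g hI r r' hg p p' hreg hdim e he
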